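/- For the path P_5 on five vertices, QEC(P_5) = -(5 - √5)/5; that is, the maximum of ⟨f, D f⟩ over f ∈ ℝ^5 with ‖f‖ = 1 and sum of coordinates zero, where D_{ij} = |i - j|, equals -(5 - √5)/5. -/

import Mathlib

set_option maxHeartbeats 1000000 in
/-- QEC(P_5) = -(5 - √5)/5, where the distance matrix of P_5 is [|i-j|]. -/
theorem qec_path_five :
    IsGreatest {x : ℝ | ∃ f : Fin 5 → ℝ,
      (∑ i, f i ^ 2) = 1 ∧ (∑ i, f i) = 0 ∧
      x = ∑ i, ∑ j, |(i.val : ℝ) - (j.val : ℝ)| * f i * f j} (-(5 - Real.sqrt 5)/5) := by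
  set s := Real.sqrt 5 with hs_def
  have hs : s ^ 2 = 5 := Real.sq_sqrt (by norm_num)
  have hs0 : 0 ≤ s := Real.sqrt_nonneg 5
  have hs2 : 2 ≤ s := by nlinarith
  have hs3 : s ≤ 3 := by nlinarith
  have h3 : ((3:Fin 5).val:ℝ) = 3 := by rw [show (3:Fin 5).val = 3 from rfl]; norm_num
  have h4 : ((4:Fin 5).val:ℝ) = 4 := by rw [show (4:Fin 5).val = 4 from rfl]; norm_num
  constructor
  · -- membership: explicit witness
    set t := Real.sqrt 10 with ht_def
    have ht : t ^ 2 = 10 := Real.sq_sqrt (by norm_num)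
    have ht0 : (0:ℝ) < t := Real.sqrt_pos.mpr (by norm_num)
    have htne : t ≠ 0 := ne_of_gt ht0
    refine ⟨![(s-1)/(2*t), -(1+s)/(2*t), 2/t, -(1+s)/(2*t), (s-1)/(2*t)], ?_, ?_, ?_⟩
    · simp [Fin.sum_univ_five]
      field_simp
      ring_nf
      linear_combination 4*hs - 4*ht
    · simp [Fin.sum_univ_five]
      field_simp
      ring
    · simp [Fin.sum_univ_five, h3, h4]
      norm_num
      field_simp
      ring_nf
      linear_combination 20*hs + (4*s - 20)*ht
  · -- upper bound
    rintro x ⟨f, h1, h2, hx⟩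
    simp only [Fin.sum_univ_five, h3, h4] at h1 h2 hx
    norm_num at hx
    set a := f 0 with ha
    set b := f 1 with hb
    set c := f 2 with hc
    set d := f 3 with hd
    set e := f 4 with he
    have hf4 : e = -(a + b + c + d) := by linarith
    rw [hf4] at h1 hx
    have key : -(5 - s)/5 - x =
        ((3*s-5)/5) * (((3+s)/2*a + b)^2 + ((3+s)/2*(a+b+c) + (1+s)/2*d)^2)
        + ((5-s)/5) * (2*a + 2*b + c)^2 := by
      linear_combination ((s-5)/5 + 2 - (2/5)*s) * h1 - hx +
        ((-3/10)*a*a*s - (3/10)*a*b*s - (3/10)*a*c*s - (3/10)*a*d*s - (3/20)*b*b*s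
          - (3/10)*b*c*s - (3/10)*b*d*s - (3/20)*c*c*s - (3/10)*c*d*s - (3/20)*d*d*s
          - (13/10)*a*a - (19/10)*a*b - (13/10)*a*c - (7/10)*a*d - (13/20)*b*b
          - (13/10)*b*c - (7/10)*b*d - (13/20)*c*c - (7/10)*c*d - (1/20)*d*d) * hs
    have hA : (0:ℝ) ≤ (3*s-5)/5 := by linarith
    have hB : (0:ℝ) ≤ (5-s)/5 := by linarith
    nlinarith [mul_nonneg hA (sq_nonneg ((3+s)/2*a + b)),
      mul_nonneg hA (sq_nonneg ((3+s)/2*(a+b+c) + (1+s)/2*d)),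
      mul_nonneg hB (sq_nonneg (2*a + 2*b + c)), key]
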